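/- arXiv:2406.11466 — 3 statements merged into one kernel-verified Lean document; each statement's English description precedes it below -/
import Mathlib

section
/- Define sequences of complex numbers c : ℤ₂ⁿ → ℂ and c' : ℤ₂ⁿ → ℂ recursively by: for n = 1, c(0) = 1, c(1) = 0, c'(0) = 0, c'(1) = 1; and for any v ∈ ℤ₂^{n-1} and vₙ ∈ ℤ₂, (c(v,0), c'(v,0)) = ((c(v)+c'(v))/2, (-c(v)+c'(v))/2) and (c(v,1), c'(v,1)) = ((c(v)-c'(v))/2, (c(v)+c'(v))/2). Then for all v ∈ ℤ₂ⁿ, c(v) = (1/2)·[((λ₂/√2)^{n-1})·λ₁^{2|v|} + ((λ₁/√2)^{n-1})·λ₂^{2|v|}], where λ₁ = e^{iπ/4}, λ₂ = e^{-iπ/4}, and |v| = v₁+⋯+vₙ. -/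
/-!
For any square root `s` of `-1`, the combination `z = c + s c'` diagonalises the recursion:
appending a bit `b` multiplies `z` by `(1 - s) / 2 · s ^ b`. Hence
`c + s c' = ((1 - s) / 2) ^ n · s ^ |v|`, and averaging the cases `s = i` and `s = -i`
gives `c`; finally `λ₁² = i`, `λ₂² = -i` and `λ / √2 = (1 ± i) / 2`.
-/

open Complex Finset

theorem Fin.sum_val_snoc {n : ℕ} (v : Fin n → Fin 2) (b : Fin 2) :
    ∑ i, ((Fin.snoc v b : Fin (n + 1) → Fin 2) i : ℕ) = ∑ i, (v i : ℕ) + b := by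
  simp [Fin.sum_univ_castSucc]

section MerminEigen

variable {K : Type*} [Field K] (c c' : (n : ℕ) → (Fin (n + 1) → Fin 2) → K) {s : K}

theorem mermin_eigen_snoc (hs : s ^ 2 = -1)
    (hrec0 : ∀ (n : ℕ) (v : Fin (n + 1) → Fin 2),
      c (n + 1) (Fin.snoc v 0) = (c n v + c' n v) / 2 ∧
      c' (n + 1) (Fin.snoc v 0) = (-c n v + c' n v) / 2)
    (hrec1 : ∀ (n : ℕ) (v : Fin (n + 1) → Fin 2),
      c (n + 1) (Fin.snoc v 1) = (c n v - c' n v) / 2 ∧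
      c' (n + 1) (Fin.snoc v 1) = (c n v + c' n v) / 2)
    (n : ℕ) (v : Fin (n + 1) → Fin 2) (b : Fin 2) :
    c (n + 1) (Fin.snoc v b) + s * c' (n + 1) (Fin.snoc v b) =
      (1 - s) / 2 * s ^ (b : ℕ) * (c n v + s * c' n v) := by
  match b with
  | 0 =>
    obtain ⟨h, h'⟩ := hrec0 n v
    rw [h, h', Fin.val_zero, pow_zero]
    linear_combination (c' n v / 2) * hs
  | 1 =>
    obtain ⟨h, h'⟩ := hrec1 n v
    rw [h, h', Fin.val_one, pow_one]
    linear_combination ((c n v - c' n v + s * c' n v) / 2) * hs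

theorem mermin_eigen (hs : s ^ 2 = -1)
    (hc1 : ∀ v : Fin 1 → Fin 2, c 0 v = if v 0 = 0 then 1 else 0)
    (hc1' : ∀ v : Fin 1 → Fin 2, c' 0 v = if v 0 = 0 then 0 else 1)
    (hrec0 : ∀ (n : ℕ) (v : Fin (n + 1) → Fin 2),
      c (n + 1) (Fin.snoc v 0) = (c n v + c' n v) / 2 ∧
      c' (n + 1) (Fin.snoc v 0) = (-c n v + c' n v) / 2)
    (hrec1 : ∀ (n : ℕ) (v : Fin (n + 1) → Fin 2),
      c (n + 1) (Fin.snoc v 1) = (c n v - c' n v) / 2 ∧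
      c' (n + 1) (Fin.snoc v 1) = (c n v + c' n v) / 2)
    (n : ℕ) (v : Fin (n + 1) → Fin 2) :
    c n v + s * c' n v = ((1 - s) / 2) ^ n * s ^ (∑ i, (v i : ℕ)) := by
  induction n with
  | zero =>
    rw [hc1 v, hc1' v, Fin.sum_univ_one]
    generalize v 0 = b
    fin_cases b <;> simp
  | succ n ih =>
    induction v using Fin.snocCases with
    | _ w b =>
      rw [mermin_eigen_snoc c c' hs hrec0 hrec1, ih, Fin.sum_val_snoc]
      ring

end MerminEigen

theorem one_add_I_div_sqrt_two_sq : ((1 + I) / (Real.sqrt 2 : ℂ)) ^ 2 = I := by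
  rw [div_pow, ← ofReal_pow, Real.sq_sqrt zero_le_two]
  push_cast
  linear_combination I_sq / 2

theorem one_sub_I_div_sqrt_two_sq : ((1 - I) / (Real.sqrt 2 : ℂ)) ^ 2 = -I := by
  rw [div_pow, ← ofReal_pow, Real.sq_sqrt zero_le_two]
  push_cast
  linear_combination I_sq / 2

theorem div_sqrt_two_div_sqrt_two (z : ℂ) :
    z / (Real.sqrt 2 : ℂ) / (Real.sqrt 2 : ℂ) = z / 2 := by
  rw [div_div, ← ofReal_mul, Real.mul_self_sqrt zero_le_two]
  norm_num

/-- The recursively defined Mermin coefficients `c, c'` on binary strings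
(`c n v` is the coefficient indexed by `v ∈ ℤ₂^{n+1}`) satisfy the closed formula
`c(v) = (1/2)·[(λ₂/√2)^{n-1} λ₁^{2|v|} + (λ₁/√2)^{n-1} λ₂^{2|v|}]`
with `λ₁ = e^{iπ/4}`, `λ₂ = e^{-iπ/4}`. -/
theorem stmt2
    (c c' : (n : ℕ) → ((Fin (n + 1) → Fin 2) → ℂ))
    (hc1 : ∀ v : Fin 1 → Fin 2, c 0 v = if v 0 = 0 then 1 else 0)
    (hc1' : ∀ v : Fin 1 → Fin 2, c' 0 v = if v 0 = 0 then 0 else 1)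
    (hrec0 : ∀ (n : ℕ) (v : Fin (n + 1) → Fin 2),
      c (n + 1) (Fin.snoc v 0) = (c n v + c' n v) / 2 ∧
      c' (n + 1) (Fin.snoc v 0) = (-c n v + c' n v) / 2)
    (hrec1 : ∀ (n : ℕ) (v : Fin (n + 1) → Fin 2),
      c (n + 1) (Fin.snoc v 1) = (c n v - c' n v) / 2 ∧
      c' (n + 1) (Fin.snoc v 1) = (c n v + c' n v) / 2) :
    ∀ (n : ℕ) (v : Fin (n + 1) → Fin 2),
      c n v = (1 / 2) *
        ((((1 - I) / (Real.sqrt 2 : ℂ)) / (Real.sqrt 2 : ℂ)) ^ n *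
            ((1 + I) / (Real.sqrt 2 : ℂ)) ^ (2 * ∑ i, (v i : ℕ)) +
          (((1 + I) / (Real.sqrt 2 : ℂ)) / (Real.sqrt 2 : ℂ)) ^ n *
            ((1 - I) / (Real.sqrt 2 : ℂ)) ^ (2 * ∑ i, (v i : ℕ))) := by
  intro n v
  have hI := mermin_eigen c c' I_sq hc1 hc1' hrec0 hrec1 n v
  have hnegI := mermin_eigen c c' (s := -I) (by simp) hc1 hc1' hrec0 hrec1 n v
  rw [div_sqrt_two_div_sqrt_two, div_sqrt_two_div_sqrt_two, pow_mul, pow_mul,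
    one_add_I_div_sqrt_two_sq, one_sub_I_div_sqrt_two_sq]
  rw [sub_neg_eq_add] at hnegI
  linear_combination (hI + hnegI) / 2
end

section
/- Define c(v) = (1/2)·[((λ₂/√2)^{n-1})·λ₁^{2|v|} + ((λ₁/√2)^{n-1})·λ₂^{2|v|}] for v ∈ ℤ₂ⁿ, with λ₁ = e^{iπ/4}, λ₂ = e^{-iπ/4}. Then Σ_{v ∈ ℤ₂ⁿ, vₙ = 0} c(v) · (((-i)^{|v|} + i^{|v|})/2) = ((√2·λ₁)^{n-1} + (√2·λ₂)^{n-1})/4 for every n ≥ 2. -/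
/-!
Since `λ₁² = i` and `λ₂² = -i`, the summand for `v` is `(A + B)/4 · (1 + (-1)^|v|)` with
`A = (λ₂/√2)^{n-1}`, `B = (λ₁/√2)^{n-1}`. Dropping the last coordinate, the sum runs over all of
`ℤ₂^{n-1}`, where the signs `(-1)^|w|` cancel because `n - 1 ≥ 1`. What remains is
`2^{n-1} (A + B)/4`, and `2^{n-1} (λ/√2)^{n-1} = (√2 λ)^{n-1}`.
-/

open Complex Finset

theorem sum_neg_one_pow_sum_fin_two_eq_zero {ι : Type*} [Fintype ι] [DecidableEq ι] [Nonempty ι]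
    {R : Type*} [CommRing R] :
    ∑ w : ι → Fin 2, (-1 : R) ^ (∑ i, (w i : ℕ)) = 0 := by
  simp_rw [← prod_pow_eq_pow_sum]
  rw [← Fintype.prod_sum (fun (_ : ι) (j : Fin 2) => (-1 : R) ^ (j : ℕ))]
  simp

theorem sum_filter_apply_last_eq {α M : Type*} [Fintype α] [DecidableEq α] [AddCommMonoid M]
    {m : ℕ} (a : α) (g : (Fin (m + 1) → α) → M) :
    ∑ v ∈ univ.filter (fun v : Fin (m + 1) → α => v (Fin.last m) = a), g v =
      ∑ w : Fin m → α, g (Fin.snoc w a) := by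
  refine (sum_nbij' (fun w => Fin.snoc w a) Fin.init ?_ ?_ ?_ ?_ ?_).symm
  · simp
  · simp
  · simp
  · intro v hv
    have hv : v (Fin.last m) = a := by simpa using hv
    rw [← hv, Fin.snoc_init_self]
  · simp

theorem sum_snoc_zero_val {m k : ℕ} (w : Fin m → Fin (k + 1)) :
    ∑ i, ((Fin.snoc w 0 : Fin (m + 1) → Fin (k + 1)) i : ℕ) = ∑ i, (w i : ℕ) := by
  simp [Fin.sum_univ_castSucc]

theorem ofReal_sqrt_two_sq : (Real.sqrt 2 : ℂ) ^ 2 = 2 := by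
  rw [← ofReal_pow, Real.sq_sqrt zero_le_two, ofReal_ofNat]

theorem two_pow_mul_div_sqrt_two_pow (z : ℂ) (k : ℕ) :
    2 ^ k * (z / (Real.sqrt 2 : ℂ)) ^ k = ((Real.sqrt 2 : ℂ) * z) ^ k := by
  have hs : (Real.sqrt 2 : ℂ) ≠ 0 := by exact_mod_cast (Real.sqrt_pos.2 two_pos).ne'
  rw [← mul_pow]
  congr 1
  field_simp
  linear_combination -z * ofReal_sqrt_two_sq

theorem half_mul_I_pow_mul_I_pow_add (A B : ℂ) (k : ℕ) :
    1 / 2 * (A * I ^ k + B * (-I) ^ k) * (((-I) ^ k + I ^ k) / 2) =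
      (A + B) / 4 * (1 + (-1) ^ k) := by
  have hI : I ^ k * (-I) ^ k = 1 := by rw [← mul_pow, mul_neg, I_mul_I, neg_neg, one_pow]
  have hII : I ^ k * I ^ k = (-1) ^ k := by rw [← mul_pow, I_mul_I]
  have hnInI : (-I) ^ k * (-I) ^ k = (-1) ^ k := by rw [← mul_pow, neg_mul_neg, I_mul_I]
  linear_combination (A + B) / 4 * hI + A / 4 * hII + B / 4 * hnInI

/-- With `c(v) = (1/2)[(λ₂/√2)^{n-1} λ₁^{2|v|} + (λ₁/√2)^{n-1} λ₂^{2|v|}]`,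
the sum of `c(v)·((-i)^{|v|}+i^{|v|})/2` over all `v ∈ ℤ₂ⁿ` with last coordinate `0`
equals `((√2 λ₁)^{n-1} + (√2 λ₂)^{n-1})/4`, for every `n ≥ 2`. -/
theorem stmt8 (n : ℕ) (hn : 2 ≤ n) :
    let lam1 : ℂ := (1 + I) / (Real.sqrt 2 : ℂ)
    let lam2 : ℂ := (1 - I) / (Real.sqrt 2 : ℂ)
    let c : (Fin n → Fin 2) → ℂ := fun v =>
      (1 / 2) * ((lam2 / (Real.sqrt 2 : ℂ)) ^ (n - 1) * lam1 ^ (2 * ∑ i, (v i : ℕ)) +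
        (lam1 / (Real.sqrt 2 : ℂ)) ^ (n - 1) * lam2 ^ (2 * ∑ i, (v i : ℕ)))
    ∑ v ∈ Finset.univ.filter (fun v : Fin n → Fin 2 => v ⟨n - 1, by omega⟩ = 0),
        c v * (((-I) ^ (∑ i, (v i : ℕ)) + I ^ (∑ i, (v i : ℕ))) / 2) =
      (((Real.sqrt 2 : ℂ) * lam1) ^ (n - 1) + ((Real.sqrt 2 : ℂ) * lam2) ^ (n - 1)) / 4 := by
  intro lam1 lam2 c
  obtain ⟨m, rfl⟩ : ∃ m, n = m + 2 := ⟨n - 2, by omega⟩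
  have hlast : (⟨m + 2 - 1, by omega⟩ : Fin (m + 2)) = Fin.last (m + 1) := rfl
  simp only [c, hlast, pow_mul, lam1, lam2, one_add_I_div_sqrt_two_sq,
    one_sub_I_div_sqrt_two_sq, half_mul_I_pow_mul_I_pow_add]
  rw [sum_filter_apply_last_eq, ← mul_sum]
  simp only [sum_snoc_zero_val, sum_add_distrib, sum_neg_one_pow_sum_fin_two_eq_zero, sum_const,
    card_univ, Fintype.card_fun, Fintype.card_fin, nsmul_eq_mul]
  push_cast
  rw [← two_pow_mul_div_sqrt_two_pow ((1 + I) / _), ← two_pow_mul_div_sqrt_two_pow ((1 - I) / _)]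
  ring
end

section
/- For every K ∈ ℕ there exist θ_K ∈ (0,1) and, for each θ ∈ (0,θ_K), a sequence 0 < γ₁(θ) < γ₂(θ) < ⋯ < γ_K(θ) < 1 of reals such that for every 1 ≤ k ≤ K: (P_k(θ)/2^k)·(2cos²θ + (4/3)sin²θ) + (8 sinθ cosθ γ_k(θ))/(3·2^k) > 1, where P_k(θ) = ∏_{j=1}^{k-1}(1+√(1−γ_j(θ)²)). -/
open Finset Real

/-- Weierstrass product inequality. -/
lemma weier (s : Finset ℕ) (f : ℕ → ℝ) (h0 : ∀ j ∈ s, 0 ≤ f j) (h1 : ∀ j ∈ s, f j ≤ 1) :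
    1 - ∑ j ∈ s, f j ≤ ∏ j ∈ s, (1 - f j) := by
  induction s using Finset.cons_induction with
  | empty => simp
  | cons a s ha ih =>
    rw [Finset.sum_cons, Finset.prod_cons]
    have h0a := h0 a (Finset.mem_cons_self a s)
    have h1a := h1 a (Finset.mem_cons_self a s)
    have ih' := ih (fun j hj => h0 j (Finset.mem_cons_of_mem hj))
      (fun j hj => h1 j (Finset.mem_cons_of_mem hj))
    have hs0 : 0 ≤ ∑ j ∈ s, f j := Finset.sum_nonneg (fun j hj => h0 j (Finset.mem_cons_of_mem hj))
    nlinarith [mul_le_mul_of_nonneg_left ih' (by linarith : (0:ℝ) ≤ 1 - f a)]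

/-- `tseq k = ∑_{j=1}^{k-1} cseq j ^ 2` where `cseq k = 2^k (1 + tseq k)`. -/
noncomputable def tseq : ℕ → ℝ
  | 0 => 0
  | 1 => 0
  | (n+2) => tseq (n+1) + (2 ^ (n+1) * (1 + tseq (n+1))) ^ 2

noncomputable def cseq (k : ℕ) : ℝ := 2 ^ k * (1 + tseq k)

lemma tseq_nonneg : ∀ k, 0 ≤ tseq k
  | 0 => le_refl 0
  | 1 => le_refl 0
  | (n+2) => by
      have := tseq_nonneg (n+1)
      simp only [tseq]
      positivity

lemma cseq_pos (k : ℕ) : 0 < cseq k := by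
  have := tseq_nonneg k
  unfold cseq; positivity

lemma tseq_le_succ (k : ℕ) : tseq k ≤ tseq (k+1) := by
  match k with
  | 0 => simp [tseq]
  | (n+1) =>
    show tseq (n+1) ≤ tseq (n+2)
    simp only [tseq]
    nlinarith [sq_nonneg ((2:ℝ) ^ (n+1) * (1 + tseq (n+1)))]

lemma tseq_mono : Monotone tseq := monotone_nat_of_le_succ tseq_le_succ

lemma cseq_lt (k : ℕ) : cseq k < cseq (k+1) := by
  have h1 := tseq_le_succ k
  have h2 := tseq_nonneg k
  have hp : (0:ℝ) < 2 ^ k := by positivity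
  have hmul : (2:ℝ) ^ k * tseq k ≤ 2 ^ k * tseq (k+1) :=
    mul_le_mul_of_nonneg_left h1 hp.le
  have hnn : 0 ≤ (2:ℝ) ^ k * tseq k := mul_nonneg hp.le h2
  unfold cseq
  have hpow : (2:ℝ) ^ (k+1) = 2 * 2 ^ k := by rw [pow_succ]; ring
  nlinarith [mul_le_mul_of_nonneg_left (tseq_nonneg (k+1)) hp.le]

lemma cseq_mono : StrictMono cseq := strictMono_nat_of_lt_succ cseq_lt

lemma tseq_eq_sum : ∀ k : ℕ, tseq k = ∑ j ∈ Finset.Ico 1 k, cseq j ^ 2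
  | 0 => by simp [tseq]
  | 1 => by simp [tseq]
  | (n+2) => by
      rw [Finset.sum_Ico_succ_top (by omega : 1 ≤ n+1), ← tseq_eq_sum (n+1)]
      simp [tseq, cseq]

set_option maxHeartbeats 1000000 in
/-- Theorem 1 (unbounded sequential tripartite nonlocality for the W state):
for every `K` there exist `θ_K ∈ (0,1)` and, for each `θ ∈ (0,θ_K)`, an increasing
sequence `0 < γ₁(θ) < ⋯ < γ_K(θ) < 1` such that for every `1 ≤ k ≤ K`,
`(P_k/2^k)(2cos²θ + (4/3)sin²θ) + 8 sinθ cosθ γ_k/(3·2^k) > 1`, where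
`P_k = ∏_{j=1}^{k-1}(1+√(1−γ_j²))`. -/
theorem stmt15 (K : ℕ) (hK : 1 ≤ K) :
    ∃ θK : ℝ, θK ∈ Set.Ioo (0 : ℝ) 1 ∧
      ∀ θ ∈ Set.Ioo (0 : ℝ) θK, ∃ γ : ℕ → ℝ,
        (∀ k, 1 ≤ k → k ≤ K → 0 < γ k ∧ γ k < 1) ∧
        (∀ k, 1 ≤ k → k < K → γ k < γ (k + 1)) ∧
        (∀ k, 1 ≤ k → k ≤ K →
          (∏ j ∈ Finset.Ico 1 k, (1 + Real.sqrt (1 - γ j ^ 2))) / 2 ^ k *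
              (2 * Real.cos θ ^ 2 + (4 / 3) * Real.sin θ ^ 2) +
            8 * Real.sin θ * Real.cos θ * γ k / (3 * 2 ^ k) > 1) := by
  have hcK : 0 < cseq K := cseq_pos K
  refine ⟨min (1/2) (1 / (2 * cseq K)), ⟨by positivity, ?_⟩, ?_⟩
  · exact lt_of_le_of_lt (min_le_left _ _) (by norm_num)
  intro θ hθ
  obtain ⟨hθ0, hθK⟩ := hθ
  have hθhalf : θ < 1/2 := lt_of_lt_of_le hθK (min_le_left _ _)
  have hθc : θ < 1 / (2 * cseq K) := lt_of_lt_of_le hθK (min_le_right _ _)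
  have hsmall : ∀ j, j ≤ K → cseq j * θ < 1/2 := by
    intro j hj
    have h1 : cseq j ≤ cseq K := cseq_mono.monotone hj
    have h2 : cseq j * θ ≤ cseq K * θ := by nlinarith [cseq_pos j]
    have h3 : cseq K * θ < cseq K * (1 / (2 * cseq K)) := mul_lt_mul_of_pos_left hθc hcK
    have h4 : cseq K * (1 / (2 * cseq K)) = 1/2 := by
      rw [mul_one_div, div_eq_div_iff (by positivity) (by norm_num : (2:ℝ) ≠ 0)]; ring
    linarith
  refine ⟨fun k => cseq k * θ, ?_, ?_, ?_⟩
  · intro k hk1 hkK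
    dsimp only
    exact ⟨mul_pos (cseq_pos k) hθ0, by linarith [hsmall k hkK]⟩
  · intro k hk1 hkK
    dsimp only
    exact mul_lt_mul_of_pos_right (cseq_lt k) hθ0
  · intro k hk1 hkK
    dsimp only
    have hp : (0:ℝ) < 2 ^ k := by positivity
    have htk0 := tseq_nonneg k
    set A : ℝ := 2 * Real.cos θ ^ 2 + (4 / 3) * Real.sin θ ^ 2 with hA
    have hsin_sq : Real.sin θ ^ 2 ≤ θ ^ 2 := by
      have h1 : Real.sin θ ≤ θ := Real.sin_le hθ0.le
      have h2 : 0 ≤ Real.sin θ := Real.sin_nonneg_of_nonneg_of_le_pi hθ0.le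
        (by nlinarith [Real.pi_gt_three])
      nlinarith
    have hAge : 2 - (2/3) * θ^2 ≤ A := by
      have := Real.sin_sq_add_cos_sq θ
      nlinarith
    have hApos : 0 ≤ A := by positivity
    -- product lower bound
    have hprod : 2 ^ (k-1) * (1 - tseq k * θ^2 / 2) ≤
        ∏ j ∈ Finset.Ico 1 k, (1 + Real.sqrt (1 - (cseq j * θ) ^ 2)) := by
      have step1 : ∀ j ∈ Finset.Ico 1 k, 2 * (1 - (cseq j * θ)^2 / 2) ≤
          1 + Real.sqrt (1 - (cseq j * θ) ^ 2) := by
        intro j hj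
        have hjK : j ≤ K := le_trans (le_of_lt (Finset.mem_Ico.mp hj).2) hkK
        have h1 : cseq j * θ < 1/2 := hsmall j hjK
        have h2 : 0 < cseq j * θ := mul_pos (cseq_pos j) hθ0
        have hle : 1 - (cseq j * θ)^2 ≤ Real.sqrt (1 - (cseq j * θ)^2) := by
          rw [Real.le_sqrt (by nlinarith) (by nlinarith)]
          nlinarith [mul_nonneg (sub_nonneg.mpr (by nlinarith : (cseq j*θ)^2 ≤ 1))
            (sq_nonneg (cseq j * θ))]
        nlinarith
      have hsum : tseq k * θ^2/2 = ∑ j ∈ Finset.Ico 1 k, (cseq j * θ)^2/2 := by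
        rw [tseq_eq_sum k, Finset.sum_mul, Finset.sum_div]
        exact Finset.sum_congr rfl (fun j _ => by ring)
      have hcard : (∏ j ∈ Finset.Ico 1 k, (2:ℝ)) = 2 ^ (k-1) := by
        rw [Finset.prod_const, Nat.card_Ico]
      calc (2:ℝ) ^ (k-1) * (1 - tseq k * θ^2 / 2)
          = (∏ j ∈ Finset.Ico 1 k, (2:ℝ)) * (1 - ∑ j ∈ Finset.Ico 1 k, (cseq j * θ)^2/2) := by
            rw [hcard, hsum]
        _ ≤ (∏ j ∈ Finset.Ico 1 k, (2:ℝ)) * ∏ j ∈ Finset.Ico 1 k, (1 - (cseq j * θ)^2/2) := by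
            apply mul_le_mul_of_nonneg_left _ (Finset.prod_nonneg fun j _ => by norm_num)
            apply weier
            · intro j hj; exact div_nonneg (sq_nonneg _) (by norm_num)
            · intro j hj
              have hjK : j ≤ K := le_trans (le_of_lt (Finset.mem_Ico.mp hj).2) hkK
              nlinarith [hsmall j hjK, mul_pos (cseq_pos j) hθ0]
        _ = ∏ j ∈ Finset.Ico 1 k, (2 * (1 - (cseq j * θ)^2/2)) := by
            rw [← Finset.prod_mul_distrib]
        _ ≤ _ := by
            apply Finset.prod_le_prod
            · intro j hj
              have hjK : j ≤ K := le_trans (le_of_lt (Finset.mem_Ico.mp hj).2) hkK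
              nlinarith [hsmall j hjK, mul_pos (cseq_pos j) hθ0]
            · exact step1
    set P : ℝ := ∏ j ∈ Finset.Ico 1 k, (1 + Real.sqrt (1 - (cseq j * θ) ^ 2)) with hP
    -- smallness of tseq k * θ^2
    have hcKθ : cseq K * θ < 1/2 := hsmall K le_rfl
    have h2K1 : (1:ℝ) ≤ 2 ^ K := one_le_pow₀ (by norm_num : (1:ℝ) ≤ 2)
    have h1tK : 1 + tseq K ≤ cseq K := by
      have := tseq_nonneg K
      unfold cseq; nlinarith
    have htkK : tseq k ≤ tseq K := tseq_mono hkK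
    have hs1 : tseq k * θ^2 ≤ 1/2 := by nlinarith
    -- lower bound on P/2^k * A
    have hdiv : (1 - tseq k*θ^2/2)/2 ≤ P/2^k := by
      rw [div_le_div_iff₀ two_pos hp]
      have h2k : (2:ℝ)^(k-1) * 2 = 2^k := by
        rw [← pow_succ]; congr 1; omega
      nlinarith
    have h5 : (1 - tseq k*θ^2/2)/2 * A ≤ P/2^k * A :=
      mul_le_mul_of_nonneg_right hdiv hApos
    have hAA : 1 - θ^2/3 - tseq k*θ^2/2 ≤ (1 - tseq k*θ^2/2)/2 * A := by
      have hhalf : (0:ℝ) ≤ (1 - tseq k*θ^2/2)/2 := by linarith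
      nlinarith [mul_le_mul_of_nonneg_left hAge hhalf,
        mul_nonneg (mul_nonneg htk0 (sq_nonneg θ)) (sq_nonneg θ)]
    -- gain term
    have hsc : Real.sin θ * Real.cos θ > (3/4) * θ := by
      have h2θ := Real.sin_gt_sub_cube (by linarith : 0 < 2*θ)
      have hm := Real.sin_two_mul θ
      nlinarith [mul_pos hθ0 hθ0, mul_pos (mul_pos hθ0 hθ0) hθ0]
    have hgain : 2*θ^2*(1+tseq k) < 8 * Real.sin θ * Real.cos θ * (cseq k * θ)/(3*2^k) := by
      rw [lt_div_iff₀ (by positivity)]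
      have hck : cseq k = 2^k * (1+tseq k) := rfl
      have hXpos : (0:ℝ) < 8*θ*(2^k*(1+tseq k)) := by positivity
      rw [hck]
      nlinarith [mul_lt_mul_of_pos_right hsc hXpos]
    have hθ2 : (0:ℝ) < θ^2 := by positivity
    have := mul_nonneg htk0 (sq_nonneg θ)
    linarith [h5, hAA, hgain, mul_nonneg htk0 hθ2.le]
end
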